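/- In a unital associative algebra over ℂ, if X and Y are elements whose commutator [X,Y] is central, then for the truncated BCH statement: ad_X²(Y) = 0, and more generally ad_Xⁿ(Y) = 0 for all n ≥ 2. Consequently, in any algebra where exponentials make sense (e.g., a Banach algebra), exp(X) exp(Y) = exp(X + Y) exp([X,Y]/2). -/

import Mathlib

/-!
Since `C = XY - YX` commutes with `X`, both `t ↦ exp(tX) Y` and `t ↦ (Y + tC) exp(tX)` solve the
linear ODE `F' = X F` with `F 0 = Y`, so `exp(tX) Y = (Y + tC) exp(tX)`. Using this and the
centrality of `C`, `F t = exp(tX) exp(tY) exp(-t²C/2)` solves `F' = (X + Y) F`, as does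
`exp(t(X + Y))`; uniqueness for this ODE at `t = 1` gives the identity.
-/

open NormedSpace

theorem iterate_commutator_eq_zero {R : Type*} [Ring R] {X Y : R}
    (h : Commute X (X * Y - Y * X)) {n : ℕ} (hn : 2 ≤ n) :
    (fun W => X * W - W * X)^[n] Y = 0 := by
  obtain ⟨m, rfl⟩ := Nat.exists_eq_add_of_le' hn
  have h2 : (fun W => X * W - W * X)^[2] Y = 0 := sub_eq_zero.2 h.eq
  rw [Function.iterate_add_apply, h2]
  exact Function.iterate_fixed (by simp) m

theorem lipschitzWith_mul_left {A : Type*} [SeminormedRing A] (a : A) :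
    LipschitzWith ‖a‖₊ (a * ·) :=
  LipschitzWith.of_dist_le_mul fun x y => by
    simpa only [dist_eq_norm, ← mul_sub, coe_nnnorm] using norm_mul_le a (x - y)

section RealBanachAlgebra

variable {A : Type*} [NormedRing A] [NormedAlgebra ℝ A]

theorem eq_of_hasDerivAt_eq_mul_left {a : A} {f g : ℝ → A}
    (hf : ∀ t, HasDerivAt f (a * f t) t) (hg : ∀ t, HasDerivAt g (a * g t) t) {t₀ : ℝ}
    (h : f t₀ = g t₀) : f = g :=
  ODE_solution_unique_univ (v := fun _ => (a * ·)) (s := fun _ => Set.univ)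
    (fun _ => (lipschitzWith_mul_left a).lipschitzOnWith) (fun t => ⟨hf t, trivial⟩)
    (fun t => ⟨hg t, trivial⟩) h

variable [CompleteSpace A]

theorem exp_smul_mul_of_commute_commutator {X Y : A} (h : Commute X (X * Y - Y * X)) (t : ℝ) :
    exp (t • X) * Y = (Y + t • (X * Y - Y * X)) * exp (t • X) := by
  set C := X * Y - Y * X with hC
  refine congrFun (eq_of_hasDerivAt_eq_mul_left (a := X) (f := fun s => exp (s • X) * Y)
    (g := fun s => (Y + s • C) * exp (s • X)) (t₀ := 0) (fun s => ?_) (fun s => ?_) (by simp)) t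
  · convert (hasDerivAt_exp_smul_const' X s).mul_const Y using 1
    exact (mul_assoc _ _ _).symm
  · have hXY : X * Y = Y * X + C := by rw [hC]; abel
    convert ((hasDerivAt_id s).smul_const C |>.const_add Y).mul (hasDerivAt_exp_smul_const' X s)
      using 1
    · rfl
    simp only [id, one_smul, mul_add, add_mul, ← mul_assoc, mul_smul_comm, smul_mul_assoc, hXY,
      h.eq]
    abel

theorem exp_smul_mul_exp_smul_mul_exp_smul_commutator {X Y : A}
    (hX : Commute X (X * Y - Y * X)) (hY : Commute Y (X * Y - Y * X)) (t : ℝ) :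
    exp (t • X) * exp (t • Y) * exp (-(t ^ 2 / 2) • (X * Y - Y * X)) = exp (t • (X + Y)) := by
  set C := X * Y - Y * X
  refine congrFun (eq_of_hasDerivAt_eq_mul_left (a := X + Y)
    (f := fun s => exp (s • X) * exp (s • Y) * exp (-(s ^ 2 / 2) • C))
    (g := fun s => exp (s • (X + Y))) (t₀ := 0) (fun s => ?_)
    (fun s => hasDerivAt_exp_smul_const' (X + Y) s) (by simp)) t
  have hsq : HasDerivAt (fun u : ℝ => -(u ^ 2 / 2)) (-s) s := by
    simpa using ((hasDerivAt_pow 2 s).div_const 2).fun_neg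
  have hY_conj : exp (s • X) * Y = (Y + s • C) * exp (s • X) :=
    exp_smul_mul_of_commute_commutator hX s
  have hC_comm : exp (s • X) * exp (s • Y) * C = C * (exp (s • X) * exp (s • Y)) :=
    ((hX.symm.smul_right s).exp_right.mul_right (hY.symm.smul_right s).exp_right).eq.symm
  convert ((hasDerivAt_exp_smul_const' X s).mul (hasDerivAt_exp_smul_const' Y s)).mul
    ((hasDerivAt_exp_smul_const' C _).scomp s hsq) using 1
  · rfl
  simp only [Pi.mul_apply, Function.comp_apply]
  rw [← mul_assoc (exp (s • X)) Y, hY_conj, mul_smul_comm, ← mul_assoc _ C, hC_comm]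
  simp only [add_mul, mul_assoc, smul_mul_assoc, neg_smul]
  abel

theorem exp_mul_exp_of_commute_commutator {X Y : A} (hX : Commute X (X * Y - Y * X))
    (hY : Commute Y (X * Y - Y * X)) :
    exp X * exp Y = exp (X + Y) * exp ((1 / 2 : ℝ) • (X * Y - Y * X)) := by
  let +nondep : NormedAlgebra ℚ A := .restrictScalars ℚ ℝ A
  have h := exp_smul_mul_exp_smul_mul_exp_smul_commutator hX hY 1
  simp only [one_smul, one_pow] at h
  rw [← h, mul_assoc, ← exp_add_of_commute ((Commute.refl _).smul_left _ |>.smul_right _),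
    ← add_smul]
  norm_num

end RealBanachAlgebra

theorem BCH_central_commutator {A : Type*} [NormedRing A] [NormedAlgebra ℂ A]
    [CompleteSpace A] (X Y : A)
    (hcentral : ∀ Z : A, Commute (X * Y - Y * X) Z) :
    (∀ n : ℕ, 2 ≤ n → (fun W => X * W - W * X)^[n] Y = 0) ∧
    (expSeries ℂ A).sum X * (expSeries ℂ A).sum Y
      = (expSeries ℂ A).sum (X + Y) * (expSeries ℂ A).sum (((1 : ℂ)/2) • (X * Y - Y * X)) := by
  refine ⟨fun n hn => iterate_commutator_eq_zero (hcentral X).symm hn, ?_⟩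
  have half_smul : ((1 : ℂ) / 2) • (X * Y - Y * X) = (1 / 2 : ℝ) • (X * Y - Y * X) := by
    rw [← Complex.coe_smul]
    norm_num
  rw [← exp_eq_expSeries_sum ℂ, half_smul]
  exact exp_mul_exp_of_commute_commutator (hcentral X).symm (hcentral Y).symm
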